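/- arXiv:2509.04234 — 3 statements merged into one kernel-verified Lean document; each statement's English description precedes it below -/
import Mathlib

section
/- Let l ≥ 2, d ≥ 1, Δ ≥ 1 be natural numbers and let m, n ≥ 2l − 3 with d ≤ n. Then the number of Brauer representation triples (k, γ₊, γ₋) for the pair (m, n−d) with ht = (m + n − l) + Δ equals Σ_{k=0}^{⌊(l−d−Δ)/2⌋} Σ_{a=0}^{l−d−Δ−2k} p(a)·p(l−d−Δ−2k−a); in particular this count is 0 when Δ > l − d. -/
/-- A Brauer representation triple for the pair `(m, n)`: a natural number
`k ≤ min m n`, a partition `γ₊` of `m - k` and a partition `γ₋` of `n - k`. -/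
structure BRT (m n : ℕ) where
  k : ℕ
  k_le : k ≤ min m n
  gp : Nat.Partition (m - k)
  gm : Nat.Partition (n - k)

namespace BRT

/-- The height of a Brauer representation triple: the total number of parts of the
two partitions (the sum of the first-column lengths of the Young diagrams). -/
def ht {m n : ℕ} (γ : BRT m n) : ℕ :=
  Multiset.card γ.gp.parts + Multiset.card γ.gm.parts

end BRT

/-- `AddBox lam mu` : the multiset of parts `mu` is obtained from the multiset of parts
`lam` by adding one box to the Young diagram (either as a new part equal to `1`, or by
increasing one existing part by `1`). -/
def AddBox (lam mu : Multiset ℕ) : Prop :=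
  mu = 1 ::ₘ lam ∨ ∃ a ∈ lam, mu = (a + 1) ::ₘ lam.erase a

/-- `γ'` (a triple at depth `d+1`) is a parent of `γ` (a triple at depth `d`):
either (a) `k' = k`, `γ₊' = γ₊` and `γ₋` is obtained from `γ₋'` by adding one box, or
(b) `k' = k - 1`, `γ₋' = γ₋` and `γ₊'` is obtained from `γ₊` by adding one box. -/
def IsParent {m n₁ n₂ : ℕ} (γ : BRT m n₁) (γ' : BRT m n₂) : Prop :=
  (γ'.k = γ.k ∧ γ'.gp.parts = γ.gp.parts ∧ AddBox γ'.gm.parts γ.gm.parts)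
  ∨ (γ'.k = γ.k - 1 ∧ γ'.gm.parts = γ.gm.parts ∧ AddBox γ.gp.parts γ'.gp.parts)

/-- `IsAncestor m n d d' γ γ'` : the triple `γ'` at depth `d'` for the pair `(m,n)` is an
ancestor of the triple `γ` at depth `d`, i.e. `γ'` is reachable from `γ` by iterating
the parent relation `d' - d` times (one step for each unit increase of depth). -/
inductive IsAncestor (m n : ℕ) : ∀ (d d' : ℕ), BRT m (n - d) → BRT m (n - d') → Prop
  | step {d : ℕ} (γ : BRT m (n - d)) (γ' : BRT m (n - (d + 1))) :
      IsParent γ γ' → IsAncestor m n d (d + 1) γ γ'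
  | tail {d d' : ℕ} {γ : BRT m (n - d)} {γ' : BRT m (n - d')} (γ'' : BRT m (n - (d' + 1))) :
      IsAncestor m n d d' γ γ' → IsParent γ' γ'' → IsAncestor m n d (d' + 1) γ γ''

/-- `Zuniv s` : the number of quadruples `(Δ, k, λ₁, λ₂)` with `Δ ≥ 1`, `k ≥ 0` natural
numbers and `λ₁, λ₂` partitions (of arbitrary natural numbers) such that
`Δ + 2k + |λ₁| + |λ₂| = s`. -/
noncomputable def Zuniv (s : ℕ) : ℕ :=
  Nat.card {q : (ℕ × ℕ) × (Σ a : ℕ, Nat.Partition a) × (Σ a : ℕ, Nat.Partition a) //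
    1 ≤ q.1.1 ∧ q.1.1 + 2 * q.1.2 + q.2.1.1 + q.2.2.1 = s}

/-- `p a` : the number of partitions of `a` (with `p 0 = 1`). -/
def p (a : ℕ) : ℕ := Fintype.card (Nat.Partition a)

/-!
Removing the first column of a Young diagram turns a partition of `N` with `N - j` parts into
a partition of `j`; conversely a partition `u` of `j` regains a first column of height `N - j`
as soon as `j + card u ≤ N`, e.g. when `2 * j ≤ N`. For a triple `(k, γ₊, γ₋)` for
`(m, n - d)` of height `H`, the reduced diagrams satisfy
`2k + |γ₊'| + |γ₋'| = m + n - d - H = l - d - Δ`, and `m, n ≥ 2l - 3` ensure that every such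
`(k, γ₊', γ₋')` comes from a triple. Since `ht γ + 2k ≤ m + n - d`, no triple has height
`m + n - l + Δ > m + n - d`.
-/

open Multiset

namespace Multiset

theorem card_le_sum_of_pos {s : Multiset ℕ} (hs : ∀ i ∈ s, 0 < i) : card s ≤ s.sum := by
  simpa using card_nsmul_le_sum hs

theorem sum_map_sub_one_add_card {s : Multiset ℕ} (hs : ∀ i ∈ s, 0 < i) :
    (s.map (· - 1)).sum + card s = s.sum := by
  conv_rhs =>
    rw [← map_id' s, map_congr rfl fun i hi => (Nat.sub_one_add_one (hs i hi).ne').symm]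
  rw [sum_map_add, map_const', sum_replicate, smul_eq_mul, mul_one]

end Multiset

namespace Nat.Partition

def eraseFirstColumn (s : Multiset ℕ) : Multiset ℕ := (s.filter (1 < ·)).map (· - 1)

/-- Rows `1` are appended so that the diagram has `N` boxes. -/
def addFirstColumn (u : Multiset ℕ) (N : ℕ) : Multiset ℕ :=
  u.map (· + 1) + replicate (N - (u.sum + card u)) 1

theorem pos_of_mem_eraseFirstColumn {s : Multiset ℕ} {i : ℕ} (hi : i ∈ eraseFirstColumn s) :
    0 < i := by
  obtain ⟨j, hj, rfl⟩ := mem_map.mp hi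
  have := (mem_filter.mp hj).2
  omega

theorem pos_of_mem_addFirstColumn {u : Multiset ℕ} {N i : ℕ} (hi : i ∈ addFirstColumn u N) :
    0 < i := by
  rcases mem_add.mp hi with hi | hi
  · obtain ⟨j, -, rfl⟩ := mem_map.mp hi
    omega
  · rw [eq_of_mem_replicate hi]
    omega

theorem filter_not_one_lt_eq_replicate {s : Multiset ℕ} (hs : ∀ i ∈ s, 0 < i) :
    s.filter (¬ 1 < ·) = replicate (card (s.filter (¬ 1 < ·))) 1 :=
  eq_replicate_card.mpr fun i hi => by
    have := hs i (mem_filter.mp hi).1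
    have := (mem_filter.mp hi).2
    omega

theorem sum_filter_one_lt_add_card {s : Multiset ℕ} (hs : ∀ i ∈ s, 0 < i) :
    (s.filter (1 < ·)).sum + card (s.filter (¬ 1 < ·)) = s.sum := by
  conv_rhs => rw [← filter_add_not (1 < ·) s, sum_add, filter_not_one_lt_eq_replicate hs]
  simp

theorem sum_eraseFirstColumn_add_card_filter {s : Multiset ℕ} (hs : ∀ i ∈ s, 0 < i) :
    (eraseFirstColumn s).sum + card (eraseFirstColumn s) = (s.filter (1 < ·)).sum :=
  (card_map _ _).symm ▸ sum_map_sub_one_add_card fun i hi => hs i (mem_filter.mp hi).1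

theorem sum_eraseFirstColumn_add_card {s : Multiset ℕ} (hs : ∀ i ∈ s, 0 < i) :
    (eraseFirstColumn s).sum + card s = s.sum := by
  have hcard : card (eraseFirstColumn s) + card (s.filter (¬ 1 < ·)) = card s := by
    rw [eraseFirstColumn, card_map, ← card_add, filter_add_not]
  have := sum_filter_one_lt_add_card hs
  have := sum_eraseFirstColumn_add_card_filter hs
  omega

theorem sum_addFirstColumn {u : Multiset ℕ} {N : ℕ} (h : u.sum + card u ≤ N) :
    (addFirstColumn u N).sum = N := by
  rw [addFirstColumn, sum_add, sum_map_add, map_id', map_const', sum_replicate, sum_replicate,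
    smul_eq_mul, smul_eq_mul, mul_one, mul_one]
  omega

theorem card_addFirstColumn (u : Multiset ℕ) (N : ℕ) :
    card (addFirstColumn u N) = card u + (N - (u.sum + card u)) := by
  simp [addFirstColumn]

theorem eraseFirstColumn_addFirstColumn {u : Multiset ℕ} (hu : ∀ i ∈ u, 0 < i) (N : ℕ) :
    eraseFirstColumn (addFirstColumn u N) = u := by
  have hbig : (u.map (· + 1)).filter (1 < ·) = u.map (· + 1) :=
    filter_eq_self.mpr fun i hi => by
      obtain ⟨j, hj, rfl⟩ := mem_map.mp hi
      have := hu j hj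
      omega
  have hsmall : (replicate (N - (u.sum + card u)) 1).filter (1 < ·) = 0 :=
    filter_eq_nil.mpr fun i hi => by
      rw [eq_of_mem_replicate hi]
      omega
  rw [eraseFirstColumn, addFirstColumn, filter_add, hbig, hsmall, add_zero, map_map]
  exact map_id' u

theorem addFirstColumn_eraseFirstColumn {s : Multiset ℕ} (hs : ∀ i ∈ s, 0 < i) :
    addFirstColumn (eraseFirstColumn s) s.sum = s := by
  have hbig : ((s.filter (1 < ·)).map (· - 1)).map (· + 1) = s.filter (1 < ·) := by
    rw [map_map]
    exact (map_congr rfl fun i hi => Nat.sub_add_cancel (mem_filter.mp hi).2.le).trans (map_id' _)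
  have hcount : s.sum - ((eraseFirstColumn s).sum + card (eraseFirstColumn s))
      = card (s.filter (¬ 1 < ·)) := by
    have := sum_filter_one_lt_add_card hs
    have := sum_eraseFirstColumn_add_card_filter hs
    omega
  rw [addFirstColumn, hcount, ← filter_not_one_lt_eq_replicate hs, eraseFirstColumn, hbig,
    filter_add_not]

theorem card_parts_le {N : ℕ} (μ : N.Partition) : card μ.parts ≤ N :=
  (card_le_sum_of_pos fun _ hi => μ.parts_pos hi).trans_eq μ.parts_sum

def firstColumnEquiv (N : ℕ) :
    N.Partition ≃ {u : Multiset ℕ // (∀ i ∈ u, 0 < i) ∧ u.sum + card u ≤ N} where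
  toFun μ := ⟨eraseFirstColumn μ.parts, fun _ => pos_of_mem_eraseFirstColumn, by
    have := sum_eraseFirstColumn_add_card_filter fun _ => μ.parts_pos
    have := sum_filter_one_lt_add_card fun _ => μ.parts_pos
    rw [μ.parts_sum] at this
    omega⟩
  invFun u := ⟨addFirstColumn u N, pos_of_mem_addFirstColumn, sum_addFirstColumn u.2.2⟩
  left_inv μ := Nat.Partition.ext <| by
    simpa only [μ.parts_sum] using addFirstColumn_eraseFirstColumn fun _ => μ.parts_pos
  right_inv u := Subtype.ext <| eraseFirstColumn_addFirstColumn u.2.1 N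

theorem card_parts_add_sum_firstColumnEquiv {N : ℕ} (μ : N.Partition) :
    card μ.parts + (firstColumnEquiv N μ : Multiset ℕ).sum = N := by
  have := sum_eraseFirstColumn_add_card fun _ => μ.parts_pos
  rw [μ.parts_sum] at this
  exact (add_comm _ _).trans this

theorem card_parts_firstColumnEquiv_symm {N : ℕ} (u : Multiset ℕ)
    (hu : (∀ i ∈ u, 0 < i) ∧ u.sum + card u ≤ N) :
    card ((firstColumnEquiv N).symm ⟨u, hu⟩).parts = N - u.sum := by
  have := hu.2
  show card (addFirstColumn u N) = _
  rw [card_addFirstColumn]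
  omega

end Nat.Partition

/-- A triple `(k, γ₊, γ₋)` for `(m, n)` of height `m + n - e` with the first columns of `γ₊`
and `γ₋` removed; together these columns have `m + n - e` boxes. -/
structure ReducedTriple (e : ℕ) where
  k : ℕ
  u : Multiset ℕ
  v : Multiset ℕ
  u_pos : ∀ i ∈ u, 0 < i
  v_pos : ∀ i ∈ v, 0 < i
  two_mul_k_add_sum : 2 * k + u.sum + v.sum = e

namespace BRT

open Nat.Partition

theorem ht_add_two_mul_k_le {m n : ℕ} (γ : BRT m n) : γ.ht + 2 * γ.k ≤ m + n := by
  have := γ.gp.card_parts_le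
  have := γ.gm.card_parts_le
  have := γ.k_le
  rw [ht]
  omega

def htEquivReducedTriple {m n H e : ℕ} (hH : H + e = m + n) (hm : 2 * e ≤ m)
    (hn : 2 * e ≤ n) :
    {γ : BRT m n // γ.ht = H} ≃ ReducedTriple e where
  toFun γ :=
    { k := γ.1.k
      u := firstColumnEquiv _ γ.1.gp
      v := firstColumnEquiv _ γ.1.gm
      u_pos := (firstColumnEquiv _ γ.1.gp).2.1
      v_pos := (firstColumnEquiv _ γ.1.gm).2.1
      two_mul_k_add_sum := by
        have := card_parts_add_sum_firstColumnEquiv γ.1.gp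
        have := card_parts_add_sum_firstColumnEquiv γ.1.gm
        have := γ.1.k_le
        have := γ.2
        rw [ht] at this
        omega }
  invFun r :=
    have := r.two_mul_k_add_sum
    have := card_le_sum_of_pos r.u_pos
    have := card_le_sum_of_pos r.v_pos
    ⟨⟨r.k, by omega, (firstColumnEquiv _).symm ⟨r.u, r.u_pos, by omega⟩,
      (firstColumnEquiv _).symm ⟨r.v, r.v_pos, by omega⟩⟩, by
      dsimp only [ht]
      rw [card_parts_firstColumnEquiv_symm, card_parts_firstColumnEquiv_symm]
      omega⟩
  left_inv γ := by
    obtain ⟨⟨k, hk, μ, ν⟩, hγ⟩ := γ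
    simp
  right_inv r := by
    cases r
    simp

end BRT

namespace ReducedTriple

def equivSigma (e : ℕ) : ReducedTriple e ≃
    Σ k : Fin (e / 2 + 1), Σ a : Fin (e - 2 * k + 1),
      Nat.Partition a × Nat.Partition (e - 2 * k - a) where
  toFun r :=
    have := r.two_mul_k_add_sum
    ⟨⟨r.k, by omega⟩, ⟨r.u.sum, by simp only; omega⟩, ⟨r.u, r.u_pos _, rfl⟩,
      ⟨r.v, r.v_pos _, by simp only; omega⟩⟩
  invFun x :=
    { k := x.1
      u := x.2.2.1.parts
      v := x.2.2.2.parts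
      u_pos := fun _ => x.2.2.1.parts_pos
      v_pos := fun _ => x.2.2.2.parts_pos
      two_mul_k_add_sum := by
        have := x.2.2.1.parts_sum
        have := x.2.2.2.parts_sum
        have := x.1.isLt
        have := x.2.1.isLt
        omega }
  left_inv r := rfl
  right_inv := by
    rintro ⟨k, ⟨a, ha⟩, ⟨u, hu, hsum⟩, ν⟩
    obtain rfl : u.sum = a := hsum
    rfl

theorem card_eq_sum (e : ℕ) : Nat.card (ReducedTriple e) =
    ∑ k ∈ Finset.range (e / 2 + 1),
      ∑ a ∈ Finset.range (e - 2 * k + 1), p a * p (e - 2 * k - a) := by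
  rw [Nat.card_congr (equivSigma e), Nat.card_eq_fintype_card, Fintype.card_sigma,
    ← Fin.sum_univ_eq_sum_range]
  refine Finset.sum_congr rfl fun k _ => ?_
  rw [Fintype.card_sigma, ← Fin.sum_univ_eq_sum_range (fun a => p a * p (e - 2 * k - a))]
  simp only [Fintype.card_prod, p]

end ReducedTriple

theorem stmt5_general (l d Δ m n : ℕ) (hd1 : 1 ≤ d) (hΔ : 1 ≤ Δ)
    (hm : 2 * l - 3 ≤ m) (hn : 2 * l - 3 ≤ n) (hdn : d ≤ n) :
    (Δ ≤ l - d →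
      Nat.card {γ : BRT m (n - d) // γ.ht = (m + n - l) + Δ}
        = ∑ k ∈ Finset.range ((l - d - Δ) / 2 + 1),
            ∑ a ∈ Finset.range (l - d - Δ - 2 * k + 1),
              p a * p (l - d - Δ - 2 * k - a)) ∧
    (l - d < Δ →
      Nat.card {γ : BRT m (n - d) // γ.ht = (m + n - l) + Δ} = 0) := by
  refine ⟨fun hΔl => ?_, fun hΔl => ?_⟩
  · have hH : m + n - l + Δ + (l - d - Δ) = m + (n - d) := by omega
    rw [Nat.card_congr (BRT.htEquivReducedTriple hH (by omega) (by omega)),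
      ReducedTriple.card_eq_sum]
  · refine @Nat.card_of_isEmpty _ ⟨fun γ => ?_⟩
    have := γ.1.ht_add_two_mul_k_le
    have := γ.2
    omega

/-- For `l ≥ 2`, `d ≥ 1`, `Δ ≥ 1`, `m, n ≥ 2l - 3` and `d ≤ n`, the number of Brauer
representation triples for the pair `(m, n - d)` of height `(m + n - l) + Δ` equals
`Σ_{k=0}^{⌊(l-d-Δ)/2⌋} Σ_{a=0}^{l-d-Δ-2k} p(a)·p(l-d-Δ-2k-a)` (when `Δ ≤ l - d`);
in particular this count is `0` when `Δ > l - d`. -/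
theorem stmt5 (l d Δ m n : ℕ) (hl : 2 ≤ l) (hd1 : 1 ≤ d) (hΔ : 1 ≤ Δ)
    (hm : 2 * l - 3 ≤ m) (hn : 2 * l - 3 ≤ n) (hdn : d ≤ n) :
    (Δ ≤ l - d →
      Nat.card {γ : BRT m (n - d) // γ.ht = (m + n - l) + Δ}
        = ∑ k ∈ Finset.range ((l - d - Δ) / 2 + 1),
            ∑ a ∈ Finset.range (l - d - Δ - 2 * k + 1),
              p a * p (l - d - Δ - 2 * k - a)) ∧
    (l - d < Δ →
      Nat.card {γ : BRT m (n - d) // γ.ht = (m + n - l) + Δ} = 0) :=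
  stmt5_general l d Δ m n hd1 hΔ hm hn hdn
end

section
/- Let l ≥ 2, let m, n ≥ 2l − 3, set N = m + n − l, and let 0 ≤ d ≤ l − 1. Then Σ_{d'=d+1}^{l−1} #{Brauer representation triples for the pair (m, n−d') with ht = N + 1} = Z_univ(l − 1 − d). In particular, taking d = 0, the total number of N-excluded triples of excess exactly 1 over all depths 1 ≤ d' ≤ l−1 equals Z_univ(l−1). -/
/-!
Deleting the first columns of `γ₊` and `γ₋` sends a triple `(k, γ₊, γ₋)` for `(m, n')` of height
`m + n' - t` to a triple `(k, λ₊, λ₋)` with `2k + |λ₊| + |λ₋| = t`. When `2t ≤ m` and `2t ≤ n'`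
this is a bijection: the columns of heights `m - k - |λ₊|` and `n' - k - |λ₋|` are then tall
enough to be glued back onto `λ₊` and `λ₋`. A triple at depth `d'` of height `N + 1` has
`t = l - 1 - d'`, so the sum over `d'` is
`Σ_{Δ = 1}^{l-1-d} #{(k, λ₊, λ₋) : 2k + |λ₊| + |λ₋| = l - 1 - d - Δ}`,
which is `Z_univ(l - 1 - d)` sorted by `Δ`.
-/

namespace Multiset

def addColumn (μ : Multiset ℕ) (h : ℕ) : Multiset ℕ :=
  μ.map (· + 1) + replicate (h - card μ) 1

def removeColumn (ν : Multiset ℕ) : Multiset ℕ :=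
  (ν.filter (1 < ·)).map (· - 1)

lemma pos_of_mem_addColumn {μ : Multiset ℕ} {h x : ℕ} (hx : x ∈ addColumn μ h) : 0 < x := by
  simp only [addColumn, mem_add, mem_map, mem_replicate] at hx
  omega

lemma pos_of_mem_removeColumn {ν : Multiset ℕ} {x : ℕ} (hx : x ∈ removeColumn ν) : 0 < x := by
  simp only [removeColumn, mem_map, mem_filter] at hx
  omega

lemma card_addColumn {μ : Multiset ℕ} {h : ℕ} (hμ : card μ ≤ h) : card (addColumn μ h) = h := by
  simp only [addColumn, card_add, card_map, card_replicate]
  omega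

lemma sum_addColumn {μ : Multiset ℕ} {h : ℕ} (hμ : card μ ≤ h) :
    (addColumn μ h).sum = μ.sum + h := by
  simp only [addColumn, sum_add, sum_map_add, map_id', map_const', sum_replicate, smul_eq_mul]
  omega

lemma removeColumn_addColumn {μ : Multiset ℕ} (hμ : ∀ x ∈ μ, 0 < x) (h : ℕ) :
    removeColumn (addColumn μ h) = μ := by
  have hfilter : (μ.map (· + 1)).filter (1 < ·) = μ.map (· + 1) :=
    filter_eq_self.mpr fun x hx => by obtain ⟨a, ha, rfl⟩ := mem_map.mp hx; have := hμ a ha; omega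
  have hones : (replicate (h - card μ) 1).filter (1 < ·) = 0 :=
    filter_eq_nil.mpr fun x hx => by rw [eq_of_mem_replicate hx]; simp
  simp [removeColumn, addColumn, filter_add, hfilter, hones, map_map]

lemma addColumn_removeColumn {ν : Multiset ℕ} (hν : ∀ x ∈ ν, 0 < x) :
    addColumn (removeColumn ν) (card ν) = ν := by
  have hbig : (ν.filter (1 < ·)).map (· - 1 + 1) = ν.filter (1 < ·) := by
    conv_rhs => rw [← map_id (ν.filter (1 < ·))]
    exact map_congr rfl fun x hx => Nat.sub_add_cancel (mem_filter.mp hx).2.le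
  have hones : replicate (card ν - card (ν.filter (1 < ·))) 1 = ν.filter (fun x => ¬ 1 < x) := by
    have hcard := congrArg card (filter_add_not (1 < ·) ν)
    rw [card_add] at hcard
    rw [← hcard, Nat.add_sub_cancel_left, eq_comm, eq_replicate_card]
    intro b hb
    have := mem_filter.mp hb
    have := hν b this.1
    omega
  simp only [addColumn, removeColumn, card_map, map_map, Function.comp_def, hbig, hones,
    filter_add_not]

lemma sum_removeColumn {ν : Multiset ℕ} (hν : ∀ x ∈ ν, 0 < x) :
    (removeColumn ν).sum + card ν = ν.sum := by
  conv_rhs => rw [← addColumn_removeColumn hν]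
  rw [sum_addColumn]
  exact (card_map _ _).trans_le (card_le_card (filter_le _ _))

end Multiset

namespace Nat.Partition

lemma card_parts_le_s9 {n : ℕ} (π : Nat.Partition n) : Multiset.card π.parts ≤ n := by
  simpa [← π.parts_sum] using Multiset.card_nsmul_le_sum fun x hx => π.parts_pos hx

lemma sigma_ext {x y : Σ a, Nat.Partition a} (h : x.2.parts = y.2.parts) : x = y := by
  obtain ⟨a, π⟩ := x
  obtain ⟨b, ρ⟩ := y
  obtain rfl : a = b := by rw [← π.parts_sum, ← ρ.parts_sum, h]
  rw [Nat.Partition.ext (x := π) (y := ρ) h]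

def removeColumn {n : ℕ} (π : Nat.Partition n) : Nat.Partition (n - Multiset.card π.parts) where
  parts := π.parts.removeColumn
  parts_pos := Multiset.pos_of_mem_removeColumn
  parts_sum := by
    have := Multiset.sum_removeColumn fun x hx => π.parts_pos hx
    have := π.parts_sum
    omega

/-- Adds a first column of height `n - a`, which is at least the number of parts of `μ`. -/
def addColumn {a : ℕ} (μ : Nat.Partition a) (n : ℕ) (h : 2 * a ≤ n) : Nat.Partition n where
  parts := μ.parts.addColumn (n - a)
  parts_pos := Multiset.pos_of_mem_addColumn
  parts_sum := by
    have := μ.card_parts_le_s9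
    rw [Multiset.sum_addColumn (by omega), μ.parts_sum]
    omega

lemma card_parts_addColumn {a : ℕ} (μ : Nat.Partition a) (n : ℕ) (h : 2 * a ≤ n) :
    Multiset.card (μ.addColumn n h).parts = n - a :=
  Multiset.card_addColumn (by have := μ.card_parts_le_s9; omega)

lemma addColumn_removeColumn {n : ℕ} (π : Nat.Partition n)
    (h : 2 * (n - Multiset.card π.parts) ≤ n) : π.removeColumn.addColumn n h = π := by
  ext1
  have := π.card_parts_le_s9
  simp only [addColumn, removeColumn, Nat.sub_sub_self this]
  exact Multiset.addColumn_removeColumn fun x hx => π.parts_pos hx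

lemma removeColumn_addColumn {a : ℕ} (μ : Nat.Partition a) (n : ℕ) (h : 2 * a ≤ n) :
    (⟨_, (μ.addColumn n h).removeColumn⟩ : Σ b, Nat.Partition b) = ⟨a, μ⟩ :=
  sigma_ext (Multiset.removeColumn_addColumn (fun _ hx => μ.parts_pos hx) _)

end Nat.Partition

namespace BRT

def equivSigma (m n : ℕ) :
    BRT m n ≃ Σ k : {k // k ≤ min m n}, Nat.Partition (m - k) × Nat.Partition (n - k) where
  toFun γ := ⟨⟨γ.k, γ.k_le⟩, γ.gp, γ.gm⟩
  invFun x := ⟨x.1, x.1.2, x.2.1, x.2.2⟩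
  left_inv _ := rfl
  right_inv _ := rfl

instance (m n : ℕ) : Finite (BRT m n) := .of_equiv _ (equivSigma m n).symm

end BRT

/-- What remains of a triple `(k, γ₊, γ₋)` for `(m, n)` of height `m + n - t` after deleting the
first columns of `γ₊` and `γ₋`. -/
def StrippedTriple (t : ℕ) : Type :=
  {q : ℕ × (Σ a, Nat.Partition a) × (Σ a, Nat.Partition a) // 2 * q.1 + q.2.1.1 + q.2.2.1 = t}

namespace BRT

def stripEquiv {m n t : ℕ} (hm : 2 * t ≤ m) (hn : 2 * t ≤ n) :
    {γ : BRT m n // γ.ht + t = m + n} ≃ StrippedTriple t where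
  toFun γ := ⟨(γ.1.k, ⟨_, γ.1.gp.removeColumn⟩, ⟨_, γ.1.gm.removeColumn⟩), by
    have := γ.1.k_le
    have := γ.1.gp.card_parts_le_s9
    have := γ.1.gm.card_parts_le_s9
    have := γ.2
    simp only [ht] at *
    omega⟩
  invFun q :=
    ⟨{ k := q.1.1
       k_le := by have := q.2; omega
       gp := q.1.2.1.2.addColumn (m - q.1.1) (by have := q.2; omega)
       gm := q.1.2.2.2.addColumn (n - q.1.1) (by have := q.2; omega) }, by
      have := q.2
      simp only [ht, Nat.Partition.card_parts_addColumn]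
      omega⟩
  left_inv := by
    rintro ⟨⟨k, hk, gp, gm⟩, hγ⟩
    simp only [Subtype.mk.injEq, mk.injEq, heq_eq_eq, true_and]
    exact ⟨gp.addColumn_removeColumn _, gm.addColumn_removeColumn _⟩
  right_inv := by
    rintro ⟨⟨k, ⟨a, μ⟩, ⟨b, ν⟩⟩, hq⟩
    refine Subtype.ext (Prod.ext rfl (Prod.ext (μ.removeColumn_addColumn _ ?_)
      (ν.removeColumn_addColumn _ ?_))) <;> dsimp only at hq ⊢ <;> omega

end BRT

instance (t : ℕ) : Finite (StrippedTriple t) :=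
  .of_equiv _ (BRT.stripEquiv (m := 2 * t) (n := 2 * t) le_rfl le_rfl)

theorem Zuniv_eq_sum (s : ℕ) :
    Zuniv s = ∑ Δ ∈ Finset.Icc 1 s, Nat.card (StrippedTriple (s - Δ)) := by
  let e : {q : (ℕ × ℕ) × (Σ a, Nat.Partition a) × (Σ a, Nat.Partition a) //
      1 ≤ q.1.1 ∧ q.1.1 + 2 * q.1.2 + q.2.1.1 + q.2.2.1 = s}
      ≃ Σ Δ : Finset.Icc 1 s, StrippedTriple (s - Δ) :=
    { toFun q := ⟨⟨q.1.1.1, Finset.mem_Icc.mpr ⟨q.2.1, by omega⟩⟩, ⟨(q.1.1.2, q.1.2), by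
          have := q.2.2; dsimp only; omega⟩⟩
      invFun x := ⟨((x.1, x.2.1.1), x.2.1.2), (Finset.mem_Icc.mp x.1.2).1, by
          have := Finset.mem_Icc.mp x.1.2; have := x.2.2; dsimp only; omega⟩
      left_inv _ := rfl
      right_inv _ := rfl }
  rw [Zuniv, Nat.card_congr e, Nat.card_sigma,
    Finset.sum_coe_sort _ fun Δ => Nat.card (StrippedTriple (s - Δ))]

theorem stmt9_general (l m n d : ℕ) (hm : 2 * l - 3 ≤ m) (hn : 2 * l - 3 ≤ n) :
    (∑ d' ∈ Finset.Icc (d + 1) (l - 1),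
        Nat.card {γ : BRT m (n - d') // γ.ht = (m + n - l) + 1})
      = Zuniv (l - 1 - d) := by
  have hdepth : ∀ d' ∈ Finset.Icc (d + 1) (l - 1),
      Nat.card {γ : BRT m (n - d') // γ.ht = (m + n - l) + 1}
        = Nat.card (StrippedTriple (l - 1 - d')) := by
    intro d' hd'
    rw [Finset.mem_Icc] at hd'
    rw [← Nat.card_congr (BRT.stripEquiv (m := m) (n := n - d') (by omega) (by omega))]
    exact Nat.card_congr (Equiv.subtypeEquivRight fun γ => by omega)
  rw [Finset.sum_congr rfl hdepth, Zuniv_eq_sum]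
  refine Finset.sum_nbij' (· - d) (· + d) ?_ ?_ ?_ ?_ ?_ <;> intro d' hd' <;>
    simp only [Finset.mem_Icc] at hd' ⊢
  any_goals omega
  rw [show l - 1 - d - (d' - d) = l - 1 - d' by omega]

/-- For `l ≥ 2`, `m, n ≥ 2l - 3`, `N = m + n - l` and `0 ≤ d ≤ l - 1`,
`Σ_{d'=d+1}^{l-1} #{triples for (m, n - d') of height N + 1} = Z_univ(l - 1 - d)`.
In particular (taking `d = 0`) the total number of `N`-excluded triples of excess
exactly `1` over all depths `1 ≤ d' ≤ l - 1` equals `Z_univ(l-1)`. -/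
theorem stmt9 (l m n d : ℕ) (hl : 2 ≤ l) (hm : 2 * l - 3 ≤ m) (hn : 2 * l - 3 ≤ n)
    (hd : d ≤ l - 1) :
    (∑ d' ∈ Finset.Icc (d + 1) (l - 1),
        Nat.card {γ : BRT m (n - d') // γ.ht = (m + n - l) + 1})
      = Zuniv (l - 1 - d) :=
  stmt9_general l m n d hm hn
end

section
/- (Minimality and uniqueness of the first red ancestor.) Let l ≥ 2, set N = m + n − l, and let γ = (k, γ₊, γ₋) be a Brauer representation triple for the pair (m,n) with ht(γ) ≤ N which possesses an N-excluded ancestor at some depth, and set t = N − ht(γ). Then every N-excluded ancestor of γ occurs at depth at least t + 1, and γ has exactly one N-excluded ancestor at depth t + 1, namely the triple (k − t − 1, γ̃₊, γ₋) where γ̃₊ is γ₊ with t+1 additional parts equal to 1 adjoined. -/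
/-!
Along a parent step the height grows by at most one, while `ht + k` never grows; the height
grows by exactly one only when a new part `1` is adjoined to `γ₊` (and `k` drops by one).
Hence an ancestor at depth `d` has height at most `ht(γ) + d`, so an `N`-excluded one needs
`d ≥ t + 1`; an `N`-excluded ancestor anywhere forces `k ≥ t + 1`, so adjoining `t + 1` parts
`1` is possible and gives one; and at depth `t + 1` an `N`-excluded ancestor has maximal
height, so every step along the way must have adjoined a part `1`.
-/

namespace AddBox

variable {lam mu : Multiset ℕ}

theorem sum_eq_add_one (h : AddBox lam mu) : mu.sum = lam.sum + 1 := by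
  rcases h with rfl | ⟨a, ha, rfl⟩
  · rw [Multiset.sum_cons, add_comm]
  · rw [Multiset.sum_cons, ← Multiset.sum_erase ha]
    ring

theorem eq_cons_one_or_card_eq (h : AddBox lam mu) :
    mu = 1 ::ₘ lam ∨ Multiset.card mu = Multiset.card lam := by
  rcases h with h | ⟨a, ha, rfl⟩
  · exact Or.inl h
  · right
    rw [Multiset.card_cons, Multiset.card_erase_add_one ha]

end AddBox

namespace IsParent

variable {m n₁ n₂ : ℕ} {γ : BRT m n₁} {γ' : BRT m n₂}

theorem of_cons_one (hk : γ'.k + 1 = γ.k) (hgp : γ'.gp.parts = 1 ::ₘ γ.gp.parts)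
    (hgm : γ'.gm.parts = γ.gm.parts) : IsParent γ γ' :=
  Or.inr ⟨by omega, hgm, Or.inl hgp⟩

theorem ht_le_or_eq_cons_one (h : IsParent γ γ') :
    (γ'.ht ≤ γ.ht ∧ γ'.k ≤ γ.k) ∨
      (γ'.ht = γ.ht + 1 ∧ γ'.k + 1 = γ.k ∧ γ'.gp.parts = 1 ::ₘ γ.gp.parts ∧
        γ'.gm.parts = γ.gm.parts) := by
  unfold BRT.ht
  rcases h with ⟨hk, hgp, hab⟩ | ⟨hk, hgm, hab⟩
  · left
    rw [hgp]
    rcases hab.eq_cons_one_or_card_eq with hgm | hc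
    · rw [hgm, Multiset.card_cons]; omega
    · omega
  · have hsum := hab.sum_eq_add_one
    rw [γ.gp.parts_sum, γ'.gp.parts_sum] at hsum
    rw [hgm]
    rcases hab.eq_cons_one_or_card_eq with hgp | hc
    · right
      rw [hgp, Multiset.card_cons]
      exact ⟨by omega, by omega, rfl, rfl⟩
    · left; omega

end IsParent

namespace IsAncestor

variable {m n d d' : ℕ} {γ : BRT m (n - d)} {γ' : BRT m (n - d')}

theorem lt (h : IsAncestor m n d d' γ γ') : d < d' := by
  induction h <;> omega

theorem ht_add_le (h : IsAncestor m n d d' γ γ') : γ'.ht + d ≤ γ.ht + d' := by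
  induction h with
  | step _ _ hp => rcases hp.ht_le_or_eq_cons_one with h | h <;> omega
  | tail _ _ hp ih => rcases hp.ht_le_or_eq_cons_one with h | h <;> omega

theorem ht_add_k_le (h : IsAncestor m n d d' γ γ') : γ'.ht + γ'.k ≤ γ.ht + γ.k := by
  induction h with
  | step _ _ hp => rcases hp.ht_le_or_eq_cons_one with h | h <;> omega
  | tail _ _ hp ih => rcases hp.ht_le_or_eq_cons_one with h | h <;> omega

theorem eq_replicate_one_of_ht_eq (h : IsAncestor m n d d' γ γ')
    (hht : γ'.ht + d = γ.ht + d') :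
    γ'.k + (d' - d) = γ.k ∧ γ'.gp.parts = Multiset.replicate (d' - d) 1 + γ.gp.parts ∧
      γ'.gm.parts = γ.gm.parts := by
  induction h with
  | step _ _ hp =>
    rcases hp.ht_le_or_eq_cons_one with h | ⟨-, hk, hgp, hgm⟩
    · omega
    · rw [Nat.add_sub_cancel_left, Multiset.replicate_one, Multiset.singleton_add]
      exact ⟨hk, hgp, hgm⟩
  | @tail d'' _ _ _ ha hp ih =>
    have hle := ha.ht_add_le
    have hlt := ha.lt
    rcases hp.ht_le_or_eq_cons_one with h | ⟨hstep, hk, hgp, hgm⟩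
    · omega
    obtain ⟨ik, igp, igm⟩ := ih (by omega)
    rw [show d'' + 1 - d = (d'' - d) + 1 by omega, Multiset.replicate_succ, Multiset.cons_add,
      hgp, igp, hgm, igm]
    exact ⟨by omega, rfl, rfl⟩

end IsAncestor

namespace BRT

variable {m n : ℕ}

def addOnes (γ : BRT m n) (j : ℕ) (hj : j ≤ γ.k) : BRT m (n - j) where
  k := γ.k - j
  k_le := by
    have := γ.k_le
    simp only [le_min_iff] at this ⊢
    omega
  gp := ⟨Multiset.replicate j 1 + γ.gp.parts,
    fun hi => (Multiset.mem_add.mp hi).elim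
      (fun hi => (Multiset.eq_of_mem_replicate hi).symm ▸ Nat.one_pos) γ.gp.parts_pos, by
    have := γ.gp.parts_sum
    have := γ.k_le
    simp only [Multiset.sum_add, Multiset.sum_replicate, smul_eq_mul, mul_one, le_min_iff]
      at this ⊢
    omega⟩
  gm := ⟨γ.gm.parts, γ.gm.parts_pos, by
    have := γ.gm.parts_sum
    omega⟩

theorem ht_addOnes (γ : BRT m n) (j : ℕ) (hj : j ≤ γ.k) :
    (γ.addOnes j hj).ht = γ.ht + j := by
  simp only [ht, addOnes, Multiset.card_add, Multiset.card_replicate]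
  omega

theorem isParent_addOnes_succ (γ : BRT m n) (j : ℕ) (hj : j + 1 ≤ γ.k) :
    IsParent (γ.addOnes j (by omega)) (γ.addOnes (j + 1) hj) :=
  IsParent.of_cons_one (by simp only [addOnes]; omega)
    (by simp only [addOnes, Multiset.replicate_succ, Multiset.cons_add]) rfl

theorem isAncestor_addOnes (γ : BRT m (n - 0)) (j : ℕ) (hj : j + 1 ≤ γ.k) :
    IsAncestor m n 0 (j + 1) γ (γ.addOnes (j + 1) hj) := by
  induction j with
  | zero =>
    refine .step γ _ (IsParent.of_cons_one (by simp only [addOnes]; omega) ?_ rfl)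
    simp only [addOnes, zero_add, Multiset.replicate_one, Multiset.singleton_add]
  | succ i ih => exact .tail _ (ih (by omega)) (γ.isParent_addOnes_succ (i + 1) hj)

end BRT

theorem stmt11_general (m n l : ℕ) (γ : BRT m (n - 0))
    (hg : γ.ht ≤ m + n - l)
    (hanc : ∃ d' : ℕ, ∃ γ' : BRT m (n - d'),
      IsAncestor m n 0 d' γ γ' ∧ m + n - l < γ'.ht) :
    (∀ d' : ℕ, ∀ γ' : BRT m (n - d'),
        IsAncestor m n 0 d' γ γ' → m + n - l < γ'.ht →
        ((m + n - l) - γ.ht) + 1 ≤ d') ∧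
    (∃ γ' : BRT m (n - (((m + n - l) - γ.ht) + 1)),
        IsAncestor m n 0 (((m + n - l) - γ.ht) + 1) γ γ' ∧ m + n - l < γ'.ht) ∧
    (∀ γ' : BRT m (n - (((m + n - l) - γ.ht) + 1)),
        IsAncestor m n 0 (((m + n - l) - γ.ht) + 1) γ γ' → m + n - l < γ'.ht →
        γ'.k = γ.k - (((m + n - l) - γ.ht) + 1) ∧
        γ'.gp.parts = Multiset.replicate (((m + n - l) - γ.ht) + 1) 1 + γ.gp.parts ∧
        γ'.gm.parts = γ.gm.parts) := by
  set N := m + n - l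
  set t := N - γ.ht
  have hk : t + 1 ≤ γ.k := by
    obtain ⟨d', γ', ha, hexcl⟩ := hanc
    have := ha.ht_add_k_le
    omega
  refine ⟨fun d' γ' ha hexcl => ?_, ⟨γ.addOnes (t + 1) hk, γ.isAncestor_addOnes t hk, ?_⟩,
    fun γ' ha hexcl => ?_⟩
  · have := ha.ht_add_le
    omega
  · rw [BRT.ht_addOnes]
    omega
  · have hle := ha.ht_add_le
    obtain ⟨hk', hgp, hgm⟩ := ha.eq_replicate_one_of_ht_eq (by omega)
    exact ⟨by omega, hgp, hgm⟩

/-- Minimality and uniqueness of the first red ancestor: for `l ≥ 2`, `N = m + n - l`, if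
`γ` is a Brauer representation triple for `(m,n)` with `ht(γ) ≤ N` possessing an
`N`-excluded ancestor at some depth, and `t = N - ht(γ)`, then every `N`-excluded ancestor
of `γ` occurs at depth at least `t + 1`, and `γ` has exactly one `N`-excluded ancestor at
depth `t + 1`, namely `(k - t - 1, γ₊ ∪ 1^{t+1}, γ₋)`. -/
theorem stmt11 (m n l : ℕ) (hl : 2 ≤ l) (γ : BRT m (n - 0))
    (hg : γ.ht ≤ m + n - l)
    (hanc : ∃ d' : ℕ, ∃ γ' : BRT m (n - d'),
      IsAncestor m n 0 d' γ γ' ∧ m + n - l < γ'.ht) :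
    (∀ d' : ℕ, ∀ γ' : BRT m (n - d'),
        IsAncestor m n 0 d' γ γ' → m + n - l < γ'.ht →
        ((m + n - l) - γ.ht) + 1 ≤ d') ∧
    (∃ γ' : BRT m (n - (((m + n - l) - γ.ht) + 1)),
        IsAncestor m n 0 (((m + n - l) - γ.ht) + 1) γ γ' ∧ m + n - l < γ'.ht) ∧
    (∀ γ' : BRT m (n - (((m + n - l) - γ.ht) + 1)),
        IsAncestor m n 0 (((m + n - l) - γ.ht) + 1) γ γ' → m + n - l < γ'.ht →
        γ'.k = γ.k - (((m + n - l) - γ.ht) + 1) ∧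
        γ'.gp.parts = Multiset.replicate (((m + n - l) - γ.ht) + 1) 1 + γ.gp.parts ∧
        γ'.gm.parts = γ.gm.parts) :=
  stmt11_general m n l γ hg hanc
end
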